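/- arXiv:2512.14230 — 3 statements merged into one kernel-verified Lean document; each statement's English description precedes it below -/
import Mathlib

section
/- Let X be a real random variable with a log-concave density, mean μ, and variance σ². Then for every threshold θ ≥ μ, the conditional expectation satisfies E[X | X > θ] ≤ θ + e·σ, where e is Euler's number. -/
/-!
Log-concavity of the density gives the survival function `S x = P(X > x)` an increasing failure
rate: `S (x + t) / S x` is non-increasing in `x`. Integrating over `t`, the mean residual life
`E[(X - x)⁺] / S x` is non-increasing, so `E[X - θ | X > θ] ≤ E[(X - μ)⁺] / S μ ≤ σ / S μ`.

It remains to show Grünbaum's bound `S μ ≥ e⁻¹`. By the same property,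
`S (μ + k h) ≤ S μ e^{-k u}` for all integers `k`, where `u = log (S μ / S (μ + h))`. Hence `X`
is stochastically dominated by a shifted exponential variable of rate `u / h`, and comparing
means gives `-log S μ ≤ 1 + u`; finally `u → 0` as `h → 0`.
-/

open MeasureTheory ProbabilityTheory Real
open scoped ENNReal
open Set Filter Topology

section LogConcave

variable {f : ℝ → ℝ}

theorem measurable_of_concaveOn_log (hf0 : ∀ x, 0 ≤ f x)
    (hlog : ConcaveOn ℝ {x | 0 < f x} fun x => log (f x)) : Measurable f := by
  refine measurable_of_Ici fun c => ?_
  rcases le_or_gt c 0 with hc | hc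
  · simp [preimage, fun x => hc.trans (hf0 x)]
  · convert (hlog.convex_ge (log c)).ordConnected.measurableSet using 1
    ext x
    simp only [mem_preimage, mem_Ici, mem_ofPred_eq]
    constructor
    · intro hcx
      exact ⟨hc.trans_le hcx, log_le_log hc hcx⟩
    · rintro ⟨hx, hcx⟩
      exact (log_le_log_iff hc hx).1 hcx

theorem mul_le_mul_of_concaveOn_log (hf0 : ∀ x, 0 ≤ f x)
    (hlog : ConcaveOn ℝ {x | 0 < f x} fun x => log (f x)) {v u t : ℝ} (hvu : v ≤ u)
    (ht : 0 ≤ t) : f (u + t) * f v ≤ f (v + t) * f u := by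
  rcases (hf0 v).eq_or_lt' with hv | hv
  · rw [hv, mul_zero]; exact mul_nonneg (hf0 _) (hf0 _)
  rcases (hf0 (u + t)).eq_or_lt' with hut | hut
  · rw [hut, zero_mul]; exact mul_nonneg (hf0 _) (hf0 _)
  rcases (add_nonneg (sub_nonneg.2 hvu) ht).eq_or_lt' with hd | hd
  · obtain ⟨rfl, rfl⟩ : u = v ∧ t = 0 := by constructor <;> linarith
    rw [mul_comm]
  -- `v + t` and `u` are the convex combinations of `v` and `u + t` with swapped weights
  set l := (u - v) / (u - v + t)
  have hl0 : 0 ≤ l := div_nonneg (sub_nonneg.2 hvu) hd.le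
  have hl1 : 0 ≤ 1 - l := by
    rw [sub_nonneg, div_le_one hd]; linarith
  have hvt : l * v + (1 - l) * (u + t) = v + t := by
    simp only [l]; field_simp; ring
  have hu : (1 - l) * v + l * (u + t) = u := by
    simp only [l]; field_simp; ring
  have h₁ : l * log (f v) + (1 - l) * log (f (u + t)) ≤ log (f (v + t)) := by
    simpa only [hvt, smul_eq_mul] using hlog.2 hv hut hl0 hl1 (by ring)
  have h₂ : (1 - l) * log (f v) + l * log (f (u + t)) ≤ log (f u) := by
    simpa only [hu, smul_eq_mul] using hlog.2 hv hut hl1 hl0 (by ring)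
  have hvt' : 0 < f (v + t) := by
    simpa only [hvt, smul_eq_mul, mem_ofPred_eq] using hlog.1 hv hut hl0 hl1 (by ring)
  have hu' : 0 < f u := by
    simpa only [hu, smul_eq_mul, mem_ofPred_eq] using hlog.1 hv hut hl1 hl0 (by ring)
  rw [← exp_log (mul_pos hut hv), ← exp_log (mul_pos hvt' hu'), exp_le_exp,
    log_mul hut.ne' hv.ne', log_mul hvt'.ne' hu'.ne']
  linarith

end LogConcave

/-- Cross-multiplied form of: `ν (Ioi (x + t)) / ν (Ioi x)` is non-increasing in `x`. -/
def HasIncreasingFailureRate (ν : Measure ℝ) : Prop :=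
  ∀ ⦃x y : ℝ⦄, x ≤ y → ∀ ⦃t : ℝ⦄, 0 ≤ t →
    ν (Ioi (y + t)) * ν (Ioi x) ≤ ν (Ioi (x + t)) * ν (Ioi y)

theorem hasIncreasingFailureRate_withDensity {f : ℝ → ℝ} (hf0 : ∀ x, 0 ≤ f x)
    (hlog : ConcaveOn ℝ {x | 0 < f x} fun x => log (f x)) :
    HasIncreasingFailureRate (volume.withDensity fun x => ENNReal.ofReal (f x)) := by
  intro x y hxy t ht
  set F : ℝ → ℝ≥0∞ := fun x => ENNReal.ofReal (f x)
  have hF : Measurable F := (measurable_of_concaveOn_log hf0 hlog).ennreal_ofReal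
  have hG : Measurable fun u => F (u + t) := hF.comp (measurable_add_const t)
  have shift (z : ℝ) : ∫⁻ u in Ioi (z + t), F u = ∫⁻ u in Ioi z, F (u + t) := by
    rw [← (measurePreserving_add_right volume t).setLIntegral_comp_preimage_emb
      (measurableEmbedding_addRight t), preimage_add_const_Ioi, add_sub_cancel_right]
  have split (G : ℝ → ℝ≥0∞) :
      ∫⁻ u in Ioi x, G u = (∫⁻ u in Ioc x y, G u) + ∫⁻ u in Ioi y, G u := by
    rw [← lintegral_union measurableSet_Ioi (Ioc_disjoint_Ioi le_rfl), Ioc_union_Ioi_eq_Ioi hxy]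
  have cross : (∫⁻ u in Ioi y, F (u + t)) * ∫⁻ v in Ioc x y, F v
      ≤ (∫⁻ v in Ioc x y, F (v + t)) * ∫⁻ u in Ioi y, F u := by
    rw [← lintegral_lintegral_mul hG.aemeasurable hF.aemeasurable, mul_comm,
      ← lintegral_lintegral_mul hF.aemeasurable hG.aemeasurable]
    refine lintegral_mono_ae (ae_restrict_of_forall_mem measurableSet_Ioi fun u hu => ?_)
    refine lintegral_mono_ae (ae_restrict_of_forall_mem measurableSet_Ioc fun v hv => ?_)
    rw [← ENNReal.ofReal_mul (hf0 _), ← ENNReal.ofReal_mul (hf0 _), mul_comm (f u)]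
    exact ENNReal.ofReal_le_ofReal (mul_le_mul_of_concaveOn_log hf0 hlog (hv.2.trans hu.le) ht)
  simp only [withDensity_apply _ measurableSet_Ioi]
  rw [shift, shift, split, split (fun u => F (u + t)), mul_add, add_mul]
  exact add_le_add_left cross _

section Tail

variable {ν : Measure ℝ}

theorem lintegral_measure_Ioi_add [IsFiniteMeasure ν] (hint : Integrable (fun a => a) ν)
    (x : ℝ) : ∫⁻ t in Ioi 0, ν (Ioi (x + t)) = ENNReal.ofReal (∫ a, max (a - x) 0 ∂ν) := by
  have hint' : Integrable (fun a => max (a - x) 0) ν := (hint.sub (integrable_const x)).pos_part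
  have hnn : 0 ≤ᵐ[ν] fun a => max (a - x) 0 := ae_of_all _ fun a => le_max_right _ _
  rw [ofReal_integral_eq_lintegral_ofReal hint' hnn,
    lintegral_eq_lintegral_meas_lt ν hnn hint'.aemeasurable]
  refine setLIntegral_congr_fun measurableSet_Ioi fun t ht => congr_arg ν ?_
  ext a
  rw [mem_Ioi] at ht
  simp only [mem_Ioi, mem_ofPred_eq, lt_max_iff]
  constructor
  · intro hxa; left; linarith
  · rintro (hta | hta) <;> linarith

namespace HasIncreasingFailureRate

theorem lintegral_mul_le (h : HasIncreasingFailureRate ν) {x y : ℝ} (hxy : x ≤ y) :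
    (∫⁻ t in Ioi 0, ν (Ioi (y + t))) * ν (Ioi x)
      ≤ (∫⁻ t in Ioi 0, ν (Ioi (x + t))) * ν (Ioi y) := by
  have hmeas (z : ℝ) : Measurable fun t => ν (Ioi (z + t)) :=
    Antitone.measurable fun _ _ hst => measure_mono (Ioi_subset_Ioi (by linarith))
  rw [← lintegral_mul_const _ (hmeas y), ← lintegral_mul_const _ (hmeas x)]
  exact lintegral_mono_ae (ae_restrict_of_forall_mem measurableSet_Ioi fun t ht => h hxy ht.le)

theorem integral_max_sub_mul_le [IsFiniteMeasure ν] (h : HasIncreasingFailureRate ν)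
    (hint : Integrable (fun a => a) ν) {x y : ℝ} (hxy : x ≤ y) :
    (∫ a, max (a - y) 0 ∂ν) * ν.real (Ioi x) ≤ (∫ a, max (a - x) 0 ∂ν) * ν.real (Ioi y) := by
  have hnn (z : ℝ) : 0 ≤ ∫ a, max (a - z) 0 ∂ν := integral_nonneg fun a => le_max_right _ _
  rw [← ENNReal.ofReal_le_ofReal_iff (by positivity), ENNReal.ofReal_mul (hnn y),
    ENNReal.ofReal_mul (hnn x), ofReal_measureReal, ofReal_measureReal,
    ← lintegral_measure_Ioi_add hint, ← lintegral_measure_Ioi_add hint]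
  exact h.lintegral_mul_le hxy

theorem measureReal_mul_le [IsFiniteMeasure ν] (h : HasIncreasingFailureRate ν) {x y : ℝ}
    (hxy : x ≤ y) {t : ℝ} (ht : 0 ≤ t) :
    ν.real (Ioi (y + t)) * ν.real (Ioi x) ≤ ν.real (Ioi (x + t)) * ν.real (Ioi y) := by
  simp only [measureReal_def, ← ENNReal.toReal_mul]
  exact ENNReal.toReal_mono (by finiteness) (h hxy ht)

theorem measureReal_Ioi_add_intCast_mul_le [IsFiniteMeasure ν] (h : HasIncreasingFailureRate ν)
    {a b u : ℝ} (hab : a ≤ b) (hb : 0 < ν.real (Ioi b))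
    (hu : ν.real (Ioi b) = ν.real (Ioi a) * exp (-u)) (k : ℤ) :
    ν.real (Ioi (a + k * (b - a))) ≤ ν.real (Ioi a) * exp (-(k * u)) := by
  have ha : 0 < ν.real (Ioi a) := hb.trans_le (measureReal_mono (Ioi_subset_Ioi hab))
  have step_right {z : ℝ} (hz : a ≤ z) :
      ν.real (Ioi (z + (b - a))) ≤ exp (-u) * ν.real (Ioi z) := by
    have := h.measureReal_mul_le hz (sub_nonneg.2 hab)
    rw [add_sub_cancel, hu] at this
    nlinarith
  have step_left {z : ℝ} (hz : z + (b - a) ≤ a) :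
      exp (-u) * ν.real (Ioi z) ≤ ν.real (Ioi (z + (b - a))) := by
    have := h.measureReal_mul_le (by linarith : z ≤ a) (sub_nonneg.2 hab)
    rw [add_sub_cancel, hu] at this
    nlinarith
  induction k using Int.induction_on with
  | zero => simp
  | succ i ih =>
    calc ν.real (Ioi (a + ((i + 1 : ℤ) : ℝ) * (b - a)))
        = ν.real (Ioi (a + (i : ℤ) * (b - a) + (b - a))) := by push_cast; ring_nf
      _ ≤ exp (-u) * ν.real (Ioi (a + (i : ℤ) * (b - a))) :=
        step_right (by push_cast; nlinarith [(i.cast_nonneg : (0 : ℝ) ≤ i)])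
      _ ≤ exp (-u) * (ν.real (Ioi a) * exp (-((i : ℤ) * u))) := by gcongr
      _ = ν.real (Ioi a) * exp (-(((i + 1 : ℤ) : ℝ) * u)) := by
        rw [mul_left_comm, ← exp_add]; push_cast; ring_nf
  | pred i ih =>
    have hz : a + ((-i - 1 : ℤ) : ℝ) * (b - a) + (b - a) = a + ((-i : ℤ) : ℝ) * (b - a) := by
      push_cast; ring
    calc ν.real (Ioi (a + ((-i - 1 : ℤ) : ℝ) * (b - a)))
        = exp u * (exp (-u) * ν.real (Ioi (a + ((-i - 1 : ℤ) : ℝ) * (b - a)))) := by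
          rw [← mul_assoc, ← exp_add, add_neg_cancel, exp_zero, one_mul]
      _ ≤ exp u * ν.real (Ioi (a + ((-i : ℤ) : ℝ) * (b - a))) := by
          gcongr
          exact hz ▸ step_left (by rw [hz]; push_cast; nlinarith [(i.cast_nonneg : (0 : ℝ) ≤ i)])
      _ ≤ exp u * (ν.real (Ioi a) * exp (-((-i : ℤ) * u))) := by gcongr
      _ = ν.real (Ioi a) * exp (-(((-i - 1 : ℤ) : ℝ) * u)) := by
        rw [mul_left_comm, ← exp_add]; push_cast; ring_nf

theorem measureReal_Ioi_le_exp [IsFiniteMeasure ν] (h : HasIncreasingFailureRate ν)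
    {a b u : ℝ} (hab : a < b) (hb : 0 < ν.real (Ioi b))
    (hu : ν.real (Ioi b) = ν.real (Ioi a) * exp (-u)) (y : ℝ) :
    ν.real (Ioi y) ≤ ν.real (Ioi a) * exp (u - u / (b - a) * (y - a)) := by
  have hba : 0 < b - a := sub_pos.2 hab
  have hu0 : 0 ≤ u := by
    have hba' : ν.real (Ioi b) ≤ ν.real (Ioi a) := measureReal_mono (Ioi_subset_Ioi hab.le)
    have ha := hb.trans_le hba'
    rw [hu, mul_le_iff_le_one_right ha, exp_le_one_iff] at hba'
    linarith
  set k := ⌊(y - a) / (b - a)⌋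
  have hk : (k : ℝ) * (b - a) ≤ y - a := (le_div_iff₀ hba).1 (Int.floor_le _)
  calc ν.real (Ioi y) ≤ ν.real (Ioi (a + k * (b - a))) :=
        measureReal_mono (Ioi_subset_Ioi (by linarith))
    _ ≤ ν.real (Ioi a) * exp (-(k * u)) := h.measureReal_Ioi_add_intCast_mul_le hab.le hb hu k
    _ ≤ ν.real (Ioi a) * exp (u - u / (b - a) * (y - a)) := by
        gcongr
        rw [div_mul_comm]
        nlinarith [Int.sub_one_lt_floor ((y - a) / (b - a))]

end HasIncreasingFailureRate

theorem integral_sub_le_inv_of_measureReal_Ioi_le [IsProbabilityMeasure ν]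
    (hint : Integrable (fun a => a) ν) {x β : ℝ} (hβ : 0 < β)
    (hS : ∀ t, 0 < t → ν.real (Ioi (x + t)) ≤ exp (-(β * t))) :
    ∫ a, a ∂ν - x ≤ β⁻¹ := by
  have hmax : ∫ a, a ∂ν - x ≤ ∫ a, max (a - x) 0 ∂ν :=
    calc ∫ a, a ∂ν - x = ∫ a, (a - x) ∂ν := by
          rw [integral_sub hint (integrable_const x), integral_const, probReal_univ, one_smul]
      _ ≤ ∫ a, max (a - x) 0 ∂ν := integral_mono (hint.sub (integrable_const x))
          (hint.sub (integrable_const x)).pos_part fun a => le_max_left _ _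
  have hexp : ∫ t in Ioi 0, exp (-(β * t)) = β⁻¹ := by
    simp_rw [← neg_mul]
    rw [integral_exp_mul_Ioi (neg_neg_of_pos hβ)]
    simp
  have htail : ENNReal.ofReal (∫ a, max (a - x) 0 ∂ν) ≤ ENNReal.ofReal β⁻¹ := by
    rw [← lintegral_measure_Ioi_add hint, ← hexp, ofReal_integral_eq_lintegral_ofReal
      (by simp_rw [← neg_mul]; exact integrableOn_exp_mul_Ioi (neg_neg_of_pos hβ) 0)
      (ae_of_all _ fun t => (exp_pos _).le)]
    refine lintegral_mono_ae (ae_restrict_of_forall_mem measurableSet_Ioi fun t ht => ?_)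
    rw [← ofReal_measureReal]
    exact ENNReal.ofReal_le_ofReal (hS t ht)
  exact hmax.trans ((ENNReal.ofReal_le_ofReal_iff (by positivity)).1 htail)

end Tail

section Grunbaum

variable {ν : Measure ℝ} [IsProbabilityMeasure ν]

theorem measureReal_Ioi_eq_one_sub_cdf (x : ℝ) : ν.real (Ioi x) = 1 - cdf ν x := by
  rw [cdf_eq_real, ← probReal_compl_eq_one_sub measurableSet_Iic, compl_Iic]

theorem tendsto_measureReal_Ioi_atBot : Tendsto (fun x => ν.real (Ioi x)) atBot (𝓝 1) := by
  simpa [measureReal_Ioi_eq_one_sub_cdf] using (tendsto_cdf_atBot ν).const_sub 1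

theorem tendsto_measureReal_Ioi_nhdsGT (x : ℝ) :
    Tendsto (fun y => ν.real (Ioi y)) (𝓝[>] x) (𝓝 (ν.real (Ioi x))) := by
  simp only [measureReal_Ioi_eq_one_sub_cdf]
  exact (((cdf ν).right_continuous x).mono Ioi_subset_Ici_self).tendsto.const_sub 1

theorem HasIncreasingFailureRate.neg_log_measureReal_Ioi_integral_le
    (h : HasIncreasingFailureRate ν) (hint : Integrable (fun a => a) ν) {b : ℝ}
    (hb : ∫ a, a ∂ν < b) (hb0 : 0 < ν.real (Ioi b)) :
    -log (ν.real (Ioi (∫ a, a ∂ν))) ≤ 1 + log (ν.real (Ioi (∫ a, a ∂ν)) / ν.real (Ioi b)) := by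
  set μ := ∫ a, a ∂ν
  set q := ν.real (Ioi μ)
  set u := log (q / ν.real (Ioi b))
  have hbq : ν.real (Ioi b) ≤ q := measureReal_mono (Ioi_subset_Ioi hb.le)
  have hq : 0 < q := hb0.trans_le hbq
  have hu0 : 0 ≤ u := log_nonneg ((one_le_div hb0).2 hbq)
  have hu : ν.real (Ioi b) = q * exp (-u) := by
    rw [exp_neg, exp_log (div_pos hq hb0), inv_div, mul_div_cancel₀ _ hq.ne']
  have henv := h.measureReal_Ioi_le_exp hb hb0 hu
  rcases hu0.eq_or_lt with hu0' | hupos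
  · have hq1 : 1 ≤ q := le_of_tendsto' tendsto_measureReal_Ioi_atBot fun y => by
      simpa [← hu0'] using henv y
    linarith [log_nonneg hq1]
  set β := u / (b - μ)
  have hβ : 0 < β := div_pos hupos (sub_pos.2 hb)
  have hdom := integral_sub_le_inv_of_measureReal_Ioi_le hint hβ
    (x := μ - (-log q - u) / β) fun t _ => by
      refine (henv _).trans_eq ?_
      rw [show ν.real (Ioi μ) = exp (log q) from (exp_log hq).symm, ← exp_add]
      congr 1
      field_simp
      ring
  rw [sub_sub_cancel, div_le_iff₀ hβ, inv_mul_cancel₀ hβ.ne'] at hdom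
  linarith

theorem HasIncreasingFailureRate.exp_neg_one_le_measureReal_Ioi_integral
    (h : HasIncreasingFailureRate ν) (hint : Integrable (fun a => a) ν)
    (hpos : 0 < ν.real (Ioi (∫ a, a ∂ν))) :
    exp (-1) ≤ ν.real (Ioi (∫ a, a ∂ν)) := by
  set μ := ∫ a, a ∂ν
  have htail := tendsto_measureReal_Ioi_nhdsGT (ν := ν) μ
  have hlog : Tendsto (fun b => 1 + log (ν.real (Ioi μ) / ν.real (Ioi b))) (𝓝[>] μ) (𝓝 1) := by
    simpa [hpos.ne'] using
      ((continuousAt_log (div_ne_zero hpos.ne' hpos.ne')).tendsto.comp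
        (tendsto_const_nhds.div htail hpos.ne')).const_add 1
  have hev : ∀ᶠ b in 𝓝[>] μ, μ < b ∧ 0 < ν.real (Ioi b) :=
    eventually_mem_nhdsWithin.and (htail.eventually (eventually_gt_nhds hpos))
  have hle : -log (ν.real (Ioi μ)) ≤ 1 :=
    ge_of_tendsto hlog (hev.mono fun b hb => h.neg_log_measureReal_Ioi_integral_le hint hb.1 hb.2)
  rw [← exp_log hpos]
  exact exp_le_exp.2 (by linarith)

end Grunbaum

section Probability

variable {Ω : Type*} [MeasurableSpace Ω] {P : Measure Ω} {X : Ω → ℝ}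

theorem integral_max_sub_integral_le_sqrt_variance [IsProbabilityMeasure P] (hX : MemLp X 2 P) :
    ∫ ω, max (X ω - P[X]) 0 ∂P ≤ √(variance X P) := by
  have hint := (hX.integrable one_le_two).sub (integrable_const P[X])
  have hY : MemLp (fun ω => |X ω - P[X]|) 2 P := by
    simpa only [Real.norm_eq_abs, Pi.sub_apply] using (hX.sub (memLp_const P[X])).norm
  have hvar := variance_nonneg (fun ω => |X ω - P[X]|) P
  rw [variance_eq_sub hY] at hvar
  simp only [Pi.pow_apply, sq_abs, ← variance_eq_integral hX.aemeasurable] at hvar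
  calc ∫ ω, max (X ω - P[X]) 0 ∂P ≤ ∫ ω, |X ω - P[X]| ∂P :=
        integral_mono hint.pos_part hint.abs fun ω => max_le (le_abs_self _) (abs_nonneg _)
    _ ≤ √(variance X P) := (le_abs_self _).trans (abs_le_sqrt (by linarith))

theorem integral_cond_lt_eq [IsFiniteMeasure P] (hX : Measurable X) (hint : Integrable X P)
    {θ : ℝ} (hθ : P {ω | θ < X ω} ≠ 0) :
    (P[|{ω | θ < X ω}])[X] = θ + (∫ ω, max (X ω - θ) 0 ∂P) / P.real {ω | θ < X ω} := by
  set A := {ω | θ < X ω}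
  have hA : MeasurableSet A := measurableSet_lt measurable_const hX
  have hpos : 0 < P.real A := ENNReal.toReal_pos hθ (measure_ne_top P A)
  have hmax : ∫ ω, max (X ω - θ) 0 ∂P = ∫ ω in A, (X ω - θ) ∂P := by
    rw [← setIntegral_eq_integral_of_forall_compl_eq_zero fun ω hω =>
      max_eq_right (sub_nonpos.2 (not_lt.1 hω))]
    exact setIntegral_congr_fun hA fun ω hω => max_eq_left (sub_nonneg.2 (le_of_lt hω))
  rw [hmax, integral_sub hint.integrableOn (integrableOn_const (measure_ne_top P A)),
    setIntegral_const, smul_eq_mul]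
  change ∫ ω, X ω ∂((P A)⁻¹ • P.restrict A) = _
  rw [integral_smul_measure, ENNReal.toReal_inv, ← measureReal_def, smul_eq_mul]
  field_simp
  ring

theorem HasIncreasingFailureRate.integral_max_sub_le [IsProbabilityMeasure P]
    (h : HasIncreasingFailureRate (P.map X)) (hX : Measurable X) (hint : Integrable X P) {θ : ℝ}
    (hθ : P[X] ≤ θ) (hpos : 0 < P.real {ω | P[X] < X ω}) :
    ∫ ω, max (X ω - θ) 0 ∂P ≤ exp 1 * (∫ ω, max (X ω - P[X]) 0 ∂P) * P.real {ω | θ < X ω} := by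
  set ν := P.map X
  have : IsProbabilityMeasure ν := Measure.isProbabilityMeasure_map hX.aemeasurable
  have hmap {g : ℝ → ℝ} (hg : Measurable g) : ∫ a, g a ∂ν = ∫ ω, g (X ω) ∂P :=
    integral_map hX.aemeasurable hg.aestronglyMeasurable
  have hintν : Integrable (fun a => a) ν :=
    (integrable_map_measure aestronglyMeasurable_id hX.aemeasurable).2 hint
  have htail (z : ℝ) : ν.real (Ioi z) = P.real {ω | z < X ω} :=
    map_measureReal_apply hX measurableSet_Ioi
  have hμ : ∫ a, a ∂ν = P[X] := hmap measurable_id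
  have hmrl := h.integral_max_sub_mul_le hintν (hμ ▸ hθ)
  have hgr := h.exp_neg_one_le_measureReal_Ioi_integral hintν (by rwa [hμ, htail])
  rw [hμ, htail, htail, hmap (by fun_prop), hmap (by fun_prop)] at hmrl
  rw [hμ, htail] at hgr
  have hnn : 0 ≤ ∫ ω, max (X ω - θ) 0 ∂P := integral_nonneg fun ω => le_max_right _ _
  calc ∫ ω, max (X ω - θ) 0 ∂P = exp 1 * ((∫ ω, max (X ω - θ) 0 ∂P) * exp (-1)) := by
        rw [mul_left_comm, ← exp_add, add_neg_cancel, exp_zero, mul_one]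
    _ ≤ exp 1 * ((∫ ω, max (X ω - θ) 0 ∂P) * P.real {ω | P[X] < X ω}) := by gcongr
    _ ≤ exp 1 * (∫ ω, max (X ω - P[X]) 0 ∂P) * P.real {ω | θ < X ω} := by
        rw [mul_assoc]; gcongr

end Probability

/-- If a real random variable `X` has a log-concave density `f`, mean `μ` and variance `σ²`,
then for every threshold `θ ≥ μ` (with `P(X > θ) > 0`),
`E[X | X > θ] ≤ θ + e·σ`. -/
theorem condExp_le_of_logConcave {Ω : Type*} [MeasurableSpace Ω]
    (P : Measure Ω) [IsProbabilityMeasure P]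
    (X : Ω → ℝ) (hX : Measurable X)
    (f : ℝ → ℝ) (hf0 : ∀ x, 0 ≤ f x)
    (hdens : Measure.map X P = volume.withDensity (fun x => ENNReal.ofReal (f x)))
    (hlog : ConcaveOn ℝ {x | 0 < f x} (fun x => Real.log (f x)))
    (μ σ : ℝ) (hσ : 0 ≤ σ)
    (hL2 : MemLp X 2 P)
    (hmean : P[X] = μ) (hvar : variance X P = σ ^ 2)
    (θ : ℝ) (hθ : μ ≤ θ) (hpos : 0 < P {ω | θ < X ω}) :
    (P[|{ω | θ < X ω}])[X] ≤ θ + Real.exp 1 * σ := by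
  have hifr : HasIncreasingFailureRate (P.map X) :=
    hdens ▸ hasIncreasingFailureRate_withDensity hf0 hlog
  have hint : Integrable X P := hL2.integrable one_le_two
  have hp : 0 < P.real {ω | θ < X ω} := ENNReal.toReal_pos hpos.ne' (measure_ne_top _ _)
  have hθ' : P[X] ≤ θ := hmean ▸ hθ
  have hkey := hifr.integral_max_sub_le hX hint hθ'
    (hp.trans_le (measureReal_mono fun ω hω => hθ'.trans_lt hω))
  have hdev := integral_max_sub_integral_le_sqrt_variance hL2
  rw [hmean] at hkey hdev
  rw [hvar, sqrt_sq hσ] at hdev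
  rw [integral_cond_lt_eq hX hint hpos.ne', add_le_add_iff_left, div_le_iff₀ hp]
  exact hkey.trans (by gcongr)
end

section
/- Fix ρ > 0 and a matrix S ∈ ℝ^{d×d̃}. Over all G ∈ ℝ^{r×d} and G̃ ∈ ℝ^{r×d̃}, the objective −Tr(G S G̃ᵀ) + (ρ/2)‖Gᵀ G̃‖_F² is minimized exactly when Gᵀ G̃ = (1/ρ)·SVD_r(S), where SVD_r(S) denotes a best rank-r approximation of S in Frobenius norm. -/
open Matrix

/-- Squared Frobenius norm of a real matrix, as `Tr(MᵀM)`. -/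
noncomputable def frobSq {a b : ℕ} (M : Matrix (Fin a) (Fin b) ℝ) : ℝ :=
  (M.transpose * M).trace

lemma trace_transpose_mul_comm {a b : ℕ} (M N : Matrix (Fin a) (Fin b) ℝ) :
    (Mᵀ * N).trace = (Nᵀ * M).trace := by
  rw [show Mᵀ * N = (Nᵀ * M)ᵀ by rw [Matrix.transpose_mul, Matrix.transpose_transpose],
    Matrix.trace_transpose]

/-- key expansion identity -/
lemma frobSq_key {a b : ℕ} (ρ : ℝ) (S M : Matrix (Fin a) (Fin b) ℝ) :
    frobSq (S - ρ • M) = frobSq S + 2 * ρ * (-(Mᵀ * S).trace + ρ / 2 * frobSq M) := by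
  have h := trace_transpose_mul_comm S M
  unfold frobSq
  simp only [Matrix.transpose_sub, Matrix.sub_mul, Matrix.mul_sub, Matrix.trace_sub,
    Matrix.transpose_smul, Matrix.smul_mul, Matrix.mul_smul, Matrix.trace_smul,
    smul_smul, smul_eq_mul]
  rw [h]; ring

lemma trace_GSGt {d dt r : ℕ} (G : Matrix (Fin r) (Fin d) ℝ)
    (Gt : Matrix (Fin r) (Fin dt) ℝ) (S : Matrix (Fin d) (Fin dt) ℝ) :
    (G * S * Gt.transpose).trace = ((G.transpose * Gt)ᵀ * S).trace := by
  rw [Matrix.transpose_mul, Matrix.transpose_transpose, Matrix.mul_assoc,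
    Matrix.trace_mul_comm, Matrix.mul_assoc, Matrix.trace_mul_comm]

/-- the objective, expressed via the distance to `S`. -/
lemma obj_eq {d dt r : ℕ} (ρ : ℝ) (hρ : 0 < ρ) (S : Matrix (Fin d) (Fin dt) ℝ)
    (G : Matrix (Fin r) (Fin d) ℝ) (Gt : Matrix (Fin r) (Fin dt) ℝ) :
    -(G * S * Gt.transpose).trace + ρ / 2 * frobSq (G.transpose * Gt)
      = (frobSq (S - ρ • (G.transpose * Gt)) - frobSq S) / (2 * ρ) := by
  rw [frobSq_key ρ S (G.transpose * Gt), trace_GSGt]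
  field_simp
  ring

/-- Rank factorization: a matrix of rank at most `r` factors as `Cᵀ * D`. -/
lemma exists_factorization {d dt r : ℕ} (B : Matrix (Fin d) (Fin dt) ℝ)
    (hB : B.rank ≤ r) :
    ∃ (C : Matrix (Fin r) (Fin d) ℝ) (D : Matrix (Fin r) (Fin dt) ℝ),
      C.transpose * D = B := by
  classical
  set f : (Fin dt → ℝ) →ₗ[ℝ] (Fin d → ℝ) := Matrix.toLin' B with hf
  set V := LinearMap.range f with hV
  have hk : Module.finrank ℝ V ≤ r := by
    have : B.rank = Module.finrank ℝ V := rfl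
    omega
  set k := Module.finrank ℝ V with hkdef
  obtain bV := Module.finBasis ℝ V
  let e : V ≃ₗ[ℝ] (Fin k → ℝ) := bV.equivFun
  let π : (Fin r → ℝ) →ₗ[ℝ] (Fin k → ℝ) := LinearMap.funLeft ℝ ℝ (Fin.castLE hk)
  let ι : (Fin k → ℝ) →ₗ[ℝ] (Fin r → ℝ) :=
    { toFun := fun x j => if h : (j : ℕ) < k then x ⟨j, h⟩ else 0
      map_add' := by intro x y; funext j; by_cases h : (j : ℕ) < k <;> simp [h]
      map_smul' := by intro c x; funext j; by_cases h : (j : ℕ) < k <;> simp [h] }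
  have hπι : π.comp ι = LinearMap.id := by
    apply LinearMap.ext; intro x; funext i
    simp [π, ι, LinearMap.funLeft, Fin.castLE, i.isLt]
  let g1 : (Fin dt → ℝ) →ₗ[ℝ] (Fin r → ℝ) := ι.comp (e.toLinearMap.comp f.rangeRestrict)
  let g2 : (Fin r → ℝ) →ₗ[ℝ] (Fin d → ℝ) := V.subtype.comp (e.symm.toLinearMap.comp π)
  have hcomp : g2.comp g1 = f := by
    apply LinearMap.ext; intro x
    have : π (ι (e (f.rangeRestrict x))) = e (f.rangeRestrict x) := by
      have := LinearMap.congr_fun hπι (e (f.rangeRestrict x))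
      simpa using this
    simp [g1, g2, this]
  refine ⟨(LinearMap.toMatrix' g2)ᵀ, LinearMap.toMatrix' g1, ?_⟩
  rw [Matrix.transpose_transpose, ← LinearMap.toMatrix'_comp, hcomp, hf,
    LinearMap.toMatrix'_toLin']

lemma rank_prod_le {d dt r : ℕ} (ρ : ℝ) (G : Matrix (Fin r) (Fin d) ℝ)
    (Gt : Matrix (Fin r) (Fin dt) ℝ) :
    (ρ • (G.transpose * Gt)).rank ≤ r := by
  have : ρ • (G.transpose * Gt) = (ρ • G.transpose) * Gt := by
    rw [Matrix.smul_mul]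
  rw [this]
  calc ((ρ • G.transpose) * Gt).rank ≤ Gt.rank := Matrix.rank_mul_le_right _ _
    _ ≤ Fintype.card (Fin r) := Matrix.rank_le_card_height Gt
    _ = r := Fintype.card_fin r

/-- Fix `ρ > 0` and `S`. Over `G ∈ ℝ^{r×d}`, `G̃ ∈ ℝ^{r×d̃}`, the objective
`−Tr(G S G̃ᵀ) + (ρ/2)‖GᵀG̃‖_F²` is minimized exactly when `GᵀG̃ = (1/ρ)·SVD_r(S)`,
where `SVD_r(S)` is a best rank-`r` approximation `T` of `S` in Frobenius norm:
(i) any `(G, G̃)` with `GᵀG̃ = ρ⁻¹ T` is a global minimizer, and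
(ii) if `(G, G̃)` is a global minimizer then `ρ·GᵀG̃` is a best rank-`r` approximation of `S`. -/
theorem contrastive_loss_minimizer (d dt r : ℕ) (ρ : ℝ) (hρ : 0 < ρ)
    (S T : Matrix (Fin d) (Fin dt) ℝ)
    (hTrank : T.rank ≤ r)
    (hTbest : ∀ B : Matrix (Fin d) (Fin dt) ℝ, B.rank ≤ r →
      frobSq (S - T) ≤ frobSq (S - B)) :
    (∀ (G : Matrix (Fin r) (Fin d) ℝ) (Gt : Matrix (Fin r) (Fin dt) ℝ),
      G.transpose * Gt = ρ⁻¹ • T →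
      ∀ (H : Matrix (Fin r) (Fin d) ℝ) (Ht : Matrix (Fin r) (Fin dt) ℝ),
        -(G * S * Gt.transpose).trace + ρ / 2 * frobSq (G.transpose * Gt)
          ≤ -(H * S * Ht.transpose).trace + ρ / 2 * frobSq (H.transpose * Ht)) ∧
    (∀ (G : Matrix (Fin r) (Fin d) ℝ) (Gt : Matrix (Fin r) (Fin dt) ℝ),
      (∀ (H : Matrix (Fin r) (Fin d) ℝ) (Ht : Matrix (Fin r) (Fin dt) ℝ),
        -(G * S * Gt.transpose).trace + ρ / 2 * frobSq (G.transpose * Gt)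
          ≤ -(H * S * Ht.transpose).trace + ρ / 2 * frobSq (H.transpose * Ht)) →
      ((ρ • (G.transpose * Gt)).rank ≤ r ∧
        ∀ B : Matrix (Fin d) (Fin dt) ℝ, B.rank ≤ r →
          frobSq (S - ρ • (G.transpose * Gt)) ≤ frobSq (S - B))) := by
  have hρ' : (0:ℝ) < 2 * ρ := by linarith
  constructor
  · intro G Gt hGGt H Ht
    rw [obj_eq ρ hρ S G Gt, obj_eq ρ hρ S H Ht]
    have h1 : frobSq (S - ρ • (G.transpose * Gt)) ≤ frobSq (S - ρ • (H.transpose * Ht)) := by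
      rw [hGGt, smul_smul, mul_inv_cancel₀ hρ.ne', one_smul]
      exact hTbest _ (rank_prod_le ρ H Ht)
    gcongr
  · intro G Gt hmin
    refine ⟨rank_prod_le ρ G Gt, ?_⟩
    intro B hB
    obtain ⟨C, D, hCD⟩ := exists_factorization B hB
    have h2 := hmin (ρ⁻¹ • C) D
    rw [obj_eq ρ hρ S G Gt, obj_eq ρ hρ S (ρ⁻¹ • C) D] at h2
    have hfac : ρ • ((ρ⁻¹ • C).transpose * D) = B := by
      rw [Matrix.transpose_smul, Matrix.smul_mul, smul_smul, mul_inv_cancel₀ hρ.ne',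
        one_smul, hCD]
    rw [hfac] at h2
    have h3 := (div_le_div_iff_of_pos_right hρ').mp h2
    linarith
end

section
/- Given paired samples (x_i, x̃_i), i = 1,...,n, with means x̄ = (1/n)Σ x_i and x̃̄ = (1/n)Σ x̃_i, and a similarity s_{ij} = ⟨G x_i, G̃ x̃_j⟩, the contrastive objective (1/(2n(n−1))) Σ_i [Σ_{j≠i}(s_{ij} − s_{ii}) + Σ_{j≠i}(s_{ji} − s_{ii})] equals −Tr(G S_n G̃ᵀ), where S_n = (1/(n−1)) Σ_i (x_i − x̄)(x̃_i − x̃̄)ᵀ is the empirical cross-covariance. -/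
/-!
The pairs with `j = i` contribute nothing, so the objective is
`(2 n (n-1))⁻¹ · 2 (∑ᵢⱼ sᵢⱼ - n ∑ᵢ sᵢᵢ)`. On the other side, `Tr(G (u vᵀ) G̃ᵀ) = ⟨G u, G̃ v⟩`, so
`(n-1) Tr(G Sₙ G̃ᵀ)` is the sum of the centred products `⟨G(xᵢ - x̄), G̃(x̃ᵢ - x̃̄)⟩`, which expands
to `∑ᵢ sᵢᵢ - n⁻¹ ∑ᵢⱼ sᵢⱼ`.
-/

open Matrix Finset

theorem Finset.sum_sum_erase_sub_diag {ι R : Type*} [Fintype ι] [DecidableEq ι] [AddCommGroup R]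
    (s : ι → ι → R) :
    ∑ i, ∑ j ∈ univ.erase i, (s i j - s i i) = ∑ i, ∑ j, s i j - Fintype.card ι • ∑ i, s i i := by
  have hdiag (i : ι) : ∑ j ∈ univ.erase i, (s i j - s i i) = ∑ j, (s i j - s i i) :=
    sum_erase _ (sub_self _)
  simp only [hdiag, sum_sub_distrib, sum_const, card_univ, smul_sum]

theorem Matrix.trace_mul_vecMulVec_mul_transpose {l m n R : Type*} [Fintype l] [Fintype m]
    [Fintype n] [CommSemiring R] (A : Matrix l m R) (B : Matrix l n R) (u : m → R) (v : n → R) :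
    trace (A * vecMulVec u v * Bᵀ) = (A *ᵥ u) ⬝ᵥ (B *ᵥ v) := by
  rw [mul_vecMulVec, vecMulVec_mul, vecMul_transpose, trace_vecMulVec]

theorem Matrix.sum_sub_mean_dotProduct_sub_mean {ι m K : Type*} [Fintype ι] [Fintype m] [Field K]
    (u v : ι → m → K) :
    ∑ i, (u i - (Fintype.card ι : K)⁻¹ • ∑ j, u j) ⬝ᵥ (v i - (Fintype.card ι : K)⁻¹ • ∑ j, v j)
      = ∑ i, u i ⬝ᵥ v i - (Fintype.card ι : K)⁻¹ * ∑ i, ∑ j, u i ⬝ᵥ v j := by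
  set c : K := (Fintype.card ι : K)⁻¹
  have hc : (Fintype.card ι : K) * c * c = c := by
    by_cases h : (Fintype.card ι : K) = 0 <;> simp [c, h]
  simp only [sub_dotProduct, dotProduct_sub, smul_dotProduct, dotProduct_smul, sum_dotProduct,
    dotProduct_sum, sum_sub_distrib, sum_const, card_univ, nsmul_eq_mul, smul_eq_mul, ← mul_sum]
  rw [sum_comm (f := fun i j => u j ⬝ᵥ v i)]
  linear_combination (∑ i, ∑ j, u i ⬝ᵥ v j) * hc

/-- The full-batch linear contrastive objective equals `−Tr(G Sₙ G̃ᵀ)`, where `Sₙ` is the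
empirical cross-covariance of the paired samples. -/
theorem contrastive_loss_eq_neg_trace (n d dt r : ℕ) (hn : 2 ≤ n)
    (x : Fin n → Fin d → ℝ) (xt : Fin n → Fin dt → ℝ)
    (G : Matrix (Fin r) (Fin d) ℝ) (Gt : Matrix (Fin r) (Fin dt) ℝ)
    (s : Fin n → Fin n → ℝ)
    (hs : ∀ i j, s i j = G.mulVec (x i) ⬝ᵥ Gt.mulVec (xt j))
    (xbar : Fin d → ℝ) (hxbar : xbar = (n : ℝ)⁻¹ • ∑ i, x i)
    (xtbar : Fin dt → ℝ) (hxtbar : xtbar = (n : ℝ)⁻¹ • ∑ i, xt i)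
    (Sn : Matrix (Fin d) (Fin dt) ℝ)
    (hSn : Sn = ((n : ℝ) - 1)⁻¹ • ∑ i, vecMulVec (x i - xbar) (xt i - xtbar)) :
    (2 * (n : ℝ) * ((n : ℝ) - 1))⁻¹ *
        (∑ i, ((∑ j ∈ Finset.univ.erase i, (s i j - s i i)) +
               ∑ j ∈ Finset.univ.erase i, (s j i - s i i)))
      = -(G * Sn * Gt.transpose).trace := by
  have hn0 : (n : ℝ) ≠ 0 := by norm_cast; omega
  have hcentered := sum_sub_mean_dotProduct_sub_mean (G *ᵥ x ·) (Gt *ᵥ xt ·)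
  simp only [Fintype.card_fin, ← hs] at hcentered
  have htrace : (G * Sn * Gtᵀ).trace
      = ((n : ℝ) - 1)⁻¹ * (∑ i, s i i - (n : ℝ)⁻¹ * ∑ i, ∑ j, s i j) := by
    rw [hSn, Matrix.mul_smul, Matrix.smul_mul, trace_smul, Matrix.mul_sum, Matrix.sum_mul,
      trace_sum, smul_eq_mul, ← hcentered]
    simp only [trace_mul_vecMulVec_mul_transpose, mulVec_sub, hxbar, hxtbar, mulVec_smul,
      mulVec_sum]
  rw [sum_add_distrib, sum_sum_erase_sub_diag s, sum_sum_erase_sub_diag (fun i j => s j i),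
    sum_comm (f := fun i j => s j i), htrace, Fintype.card_fin]
  field_simp
  ring
end
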